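/- Let H be a formal power series with H(0) ≠ 0, G(x) = x·H(x) with composita G^Δ(n,k) = [x^n]G(x)^k, and let A satisfy A(0) = 0 and A(x) = x·H(A(x)). Then the derivative A'(x) equals ∑_{n≥1} G^Δ(2n−1, n)·x^{n−1}; that is, the generating function for the central coefficients G^Δ(2n−1,n) of the triangle is A'(x). -/

import Mathlib

open PowerSeries Finset

/-- Substitution of `G` (with zero constant term) into `F`: the composition `F(G(x))`. -/
noncomputable def pcomp {R : Type*} [CommRing R] (F G : PowerSeries R) : PowerSeries R :=
  PowerSeries.mk fun n => ∑ m ∈ range (n + 1), coeff m F * coeff n (G ^ m)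

/-!
Lagrange inversion on the diagonal. Put `u = H(A)`, so `A = X u` and
`A' = u^(m+1) · W` with `W = u^-(m+1) (X u)'`. Modulo `X^(m+1)` the power `u^(m+1)` agrees with
`P(A)`, where `P = (trunc H)^(m+1)` has the same first `m+1` coefficients as `H^(m+1)`; hence
`[x^m] A' = ∑ⱼ Pⱼ [x^m] (X u)^j W = ∑ⱼ Pⱼ [x^(m-j)] u^-(m-j+1) (X u)'`.
Since `u^-(k+1) (X u)' = u^-k - X (u^-k)' / k`, whose coefficient of `x^k` is zero for `k > 0`,
only `j = m` survives, leaving `[x^m] H^(m+1) = [x^(2m+1)] (X H)^(m+1)`.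
-/

namespace PowerSeries

variable {R : Type*} [CommSemiring R]

theorem coeff_X_mul_derivative (f : R⟦X⟧) (k : ℕ) :
    coeff k (X * d⁄dX R f) = k * coeff k f := by
  cases k with
  | zero => simp
  | succ j => rw [coeff_succ_X_mul, coeff_derivative, mul_comm]; push_cast; rfl

theorem coeff_pow_eq_zero_of_lt {A : R⟦X⟧} (hA : constantCoeff A = 0)
    {j l : ℕ} (hlj : l < j) : coeff l (A ^ j) = 0 :=
  X_pow_dvd_iff.mp (pow_dvd_pow_of_dvd (X_dvd_iff.mpr hA) j) l hlj

variable {K : Type*} [Field K]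

theorem inv_pow_succ_mul_derivative_X_mul {u : K⟦X⟧} (hu : constantCoeff u ≠ 0) (k : ℕ) :
    u⁻¹ ^ (k + 1) * d⁄dX K (X * u) = u⁻¹ ^ k + X * (u⁻¹ ^ (k + 1) * d⁄dX K u) := by
  have := PowerSeries.inv_mul_cancel u hu
  rw [Derivation.leibniz, derivative_X, smul_eq_mul, smul_eq_mul]
  linear_combination u⁻¹ ^ k * this

theorem derivative_inv_pow {u : K⟦X⟧} (k : ℕ) :
    d⁄dX K (u⁻¹ ^ k) = -(k * (u⁻¹ ^ (k + 1) * d⁄dX K u)) := by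
  rw [derivative_pow, derivative_inv']
  rcases k with _ | k
  · simp
  · push_cast; ring

theorem coeff_inv_pow_succ_mul_derivative_X_mul [CharZero K] {u : K⟦X⟧}
    (hu : constantCoeff u ≠ 0) (k : ℕ) :
    coeff k (u⁻¹ ^ (k + 1) * d⁄dX K (X * u)) = if k = 0 then 1 else 0 := by
  rw [inv_pow_succ_mul_derivative_X_mul hu, map_add]
  split_ifs with hk
  · subst hk; simp
  · have hX : (k : K) * coeff k (X * (u⁻¹ ^ (k + 1) * d⁄dX K u))
        = -(k * coeff k (u⁻¹ ^ k)) := by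
      rw [← coeff_X_mul_derivative (u⁻¹ ^ k), derivative_inv_pow, ← coeff_C_mul, ← map_neg]
      congr 1
      simp only [map_natCast]
      ring
    have hk' : (k : K) ≠ 0 := Nat.cast_ne_zero.mpr hk
    rw [mul_left_cancel₀ hk' (hX.trans (mul_neg _ _).symm), add_neg_cancel]

theorem coeff_X_mul_pow_mul_inv_pow_succ_mul_derivative [CharZero K] {u : K⟦X⟧}
    (hu : constantCoeff u ≠ 0) (j m : ℕ) :
    coeff m ((X * u) ^ j * (u⁻¹ ^ (m + 1) * d⁄dX K (X * u))) = if j = m then 1 else 0 := by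
  rcases le_or_gt j m with hjm | hmj
  · obtain ⟨i, rfl⟩ := Nat.exists_eq_add_of_le hjm
    have hcancel : (X * u) ^ j * (u⁻¹ ^ (j + i + 1) * d⁄dX K (X * u))
        = X ^ j * ((u * u⁻¹) ^ j * (u⁻¹ ^ (i + 1) * d⁄dX K (X * u))) := by ring
    rw [hcancel, PowerSeries.mul_inv_cancel u hu, one_pow, one_mul, add_comm j i,
      coeff_X_pow_mul, coeff_inv_pow_succ_mul_derivative_X_mul hu]
    simp
  · rw [mul_pow, mul_assoc, coeff_X_pow_mul', if_neg (by omega), if_neg (by omega)]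

theorem coeff_aeval_X_mul_mul_inv_pow_succ_mul_derivative [CharZero K] {u : K⟦X⟧}
    (hu : constantCoeff u ≠ 0) (P : Polynomial K) (m : ℕ) :
    coeff m (Polynomial.aeval (X * u) P * (u⁻¹ ^ (m + 1) * d⁄dX K (X * u))) = P.coeff m := by
  induction P using Polynomial.induction_on' with
  | add p q hp hq => rw [map_add, add_mul, map_add, hp, hq, Polynomial.coeff_add]
  | monomial j a =>
    rw [Polynomial.aeval_monomial, mul_assoc, algebraMap_eq, coeff_C_mul,
      coeff_X_mul_pow_mul_inv_pow_succ_mul_derivative hu, Polynomial.coeff_monomial]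
    simp

end PowerSeries

section Pcomp

variable {R : Type*} [CommRing R]

theorem constantCoeff_pcomp (F A : R⟦X⟧) :
    constantCoeff (pcomp F A) = constantCoeff F := by
  rw [← coeff_zero_eq_constantCoeff_apply, ← coeff_zero_eq_constantCoeff_apply, pcomp, coeff_mk]
  simp

theorem trunc_pcomp (F : R⟦X⟧) {A : R⟦X⟧} (hA : constantCoeff A = 0)
    (n : ℕ) : trunc n (pcomp F A) = trunc n (Polynomial.aeval A (trunc n F)) := by
  ext l
  simp only [coeff_trunc]
  split_ifs with hl
  · rw [Polynomial.aeval_def, eval₂_trunc_eq_sum_range, map_sum, pcomp, coeff_mk]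
    simp only [algebraMap_eq, coeff_C_mul]
    refine sum_subset (range_subset_range.mpr hl) fun j _ hj => ?_
    rw [coeff_pow_eq_zero_of_lt hA (by simpa using hj), mul_zero]
  · rfl

end Pcomp

theorem stmt_7_general {K : Type*} [Field K] [CharZero K] (H A : PowerSeries K)
    (hH : constantCoeff H ≠ 0) (hA : A = X * pcomp H A) :
    derivativeFun A =
      PowerSeries.mk fun m => coeff (2 * (m + 1) - 1) ((X * H) ^ (m + 1)) := by
  set u := pcomp H A
  have hu : constantCoeff u ≠ 0 := by rwa [constantCoeff_pcomp]
  have hA0 : constantCoeff A = 0 := by rw [hA]; simp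
  ext m
  rw [coeff_mk, show 2 * (m + 1) - 1 = m + (m + 1) by omega, mul_pow, coeff_X_pow_mul]
  set P := trunc (m + 1) H ^ (m + 1)
  set W := u⁻¹ ^ (m + 1) * d⁄dX K (X * u)
  have hderiv : d⁄dX K A = u ^ (m + 1) * W := by
    rw [← mul_assoc, ← mul_pow, PowerSeries.mul_inv_cancel u hu, one_pow, one_mul, ← hA]
  have hu_pow : trunc (m + 1) (u ^ (m + 1)) = trunc (m + 1) (Polynomial.aeval A P) := by
    rw [← trunc_trunc_pow, trunc_pcomp H hA0, trunc_trunc_pow, ← map_pow (Polynomial.aeval A)]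
  calc coeff m (d⁄dX K A) = coeff m (Polynomial.aeval A P * W) := by
        rw [hderiv, coeff_mul_eq_coeff_trunc_mul_trunc _ _ (lt_add_one m), hu_pow,
          ← coeff_mul_eq_coeff_trunc_mul_trunc _ _ (lt_add_one m)]
    _ = P.coeff m := by
        rw [hA]; exact coeff_aeval_X_mul_mul_inv_pow_succ_mul_derivative hu P m
    _ = coeff m (H ^ (m + 1)) := by
        rw [← Polynomial.coeff_coe, ← coeff_coe_trunc_of_lt (lt_add_one m), Polynomial.coe_pow,
          trunc_trunc_pow, coeff_coe_trunc_of_lt (lt_add_one m)]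

theorem stmt_7 {K : Type*} [Field K] [CharZero K] (H A : PowerSeries K)
    (hH : constantCoeff H ≠ 0) (hA0 : constantCoeff A = 0)
    (hA : A = X * pcomp H A) :
    derivativeFun A =
      PowerSeries.mk fun m => coeff (2 * (m + 1) - 1) ((X * H) ^ (m + 1)) :=
  stmt_7_general H A hH hA
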